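/- arXiv:math/0408308 — 2 statements merged into one kernel-verified Lean document; each statement's English description precedes it below -/
import Mathlib

section
/- Barnes' first lemma: for complex numbers α, β, γ, δ with positive real parts, ∫_{−i∞}^{i∞} Γ(α+t)Γ(β+t)Γ(γ−t)Γ(δ−t) dt = 2πi · Γ(α+γ)Γ(α+δ)Γ(β+γ)Γ(β+δ)/Γ(α+β+γ+δ), where the integral along the imaginary axis means ∫_{−∞}^{∞} Γ(α+iy)Γ(β+iy)Γ(γ−iy)Γ(δ−iy) · i dy. -/
open MeasureTheory Complex

open Real Set FourierTransform

noncomputable def gg (a c : ℂ) (s : ℝ) : ℂ :=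
  Complex.exp (a * s - (a + c) * Real.log (1 + Real.exp s))

lemma cpow_pos_real {r : ℝ} (hr : 0 < r) (z : ℂ) :
    (r : ℂ) ^ z = Complex.exp (z * (Real.log r : ℂ)) := by
  rw [Complex.cpow_def_of_ne_zero (by exact_mod_cast hr.ne'),
    ← Complex.ofReal_log hr.le, mul_comm]

/-- the sigmoid. -/
noncomputable def sg (s : ℝ) : ℝ := Real.exp s / (1 + Real.exp s)

lemma sg_pos (s : ℝ) : 0 < sg s := div_pos (Real.exp_pos s) (by positivity)

lemma sg_lt_one (s : ℝ) : sg s < 1 := by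
  rw [sg, div_lt_one (by positivity)]; linarith

lemma one_sub_sg (s : ℝ) : 1 - sg s = 1 / (1 + Real.exp s) := by
  rw [sg]; field_simp; ring

lemma hasDerivAt_sg (s : ℝ) :
    HasDerivAt sg (Real.exp s / (1 + Real.exp s) ^ 2) s := by
  have h1 : HasDerivAt (fun s : ℝ => 1 + Real.exp s) (Real.exp s) s :=
    (Real.hasDerivAt_exp s).const_add 1
  have := (Real.hasDerivAt_exp s).div h1 (by positivity)
  refine this.congr_deriv ?_
  ring

lemma sg_injOn : Set.InjOn sg Set.univ := by
  intro s _ t _ h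
  have h1 : (1:ℝ) + Real.exp s ≠ 0 := by positivity
  have h2 : (1:ℝ) + Real.exp t ≠ 0 := by positivity
  rw [sg, sg, div_eq_div_iff h1 h2] at h
  have : Real.exp s = Real.exp t := by linear_combination h
  exact Real.exp_injective this

lemma sg_image : sg '' Set.univ = Set.Ioo 0 1 := by
  rw [Set.image_univ]
  ext x
  constructor
  · rintro ⟨s, rfl⟩; exact ⟨sg_pos s, sg_lt_one s⟩
  · rintro ⟨hx0, hx1⟩
    refine ⟨Real.log (x / (1 - x)), ?_⟩
    have h1 : (0:ℝ) < 1 - x := by linarith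
    rw [sg, Real.exp_log (by positivity)]
    field_simp; ring

lemma sg_log (s : ℝ) : Real.log (sg s) = s - Real.log (1 + Real.exp s) := by
  rw [sg, Real.log_div (Real.exp_ne_zero s) (by positivity), Real.log_exp]

lemma one_sub_sg_log (s : ℝ) : Real.log (1 - sg s) = -Real.log (1 + Real.exp s) := by
  rw [one_sub_sg, one_div, Real.log_inv]

lemma key_eq (a c : ℂ) (s : ℝ) :
    |Real.exp s / (1 + Real.exp s) ^ 2| •
      ((sg s : ℂ) ^ (a - 1) * ((1:ℂ) - (sg s : ℝ)) ^ (c - 1)) = gg a c s := by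
  have hL : Real.exp (s - 2 * Real.log (1 + Real.exp s))
      = Real.exp s / (1 + Real.exp s) ^ 2 := by
    rw [Real.exp_sub, two_mul, Real.exp_add, Real.exp_log (by positivity)]
    ring
  have h1 : ((1:ℂ) - (sg s : ℝ)) = ((1 - sg s : ℝ) : ℂ) := by push_cast; ring
  rw [abs_of_pos (by positivity), h1, cpow_pos_real (sg_pos s),
    cpow_pos_real (by linarith [sg_lt_one s] : (0:ℝ) < 1 - sg s),
    ← hL, Complex.real_smul, Complex.ofReal_exp, ← Complex.exp_add, ← Complex.exp_add,
    sg_log, one_sub_sg_log, gg]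
  congr 1
  push_cast
  ring

lemma gg_integral {a c : ℂ} (ha : 0 < a.re) (hc : 0 < c.re) :
    ∫ s : ℝ, gg a c s = Complex.Gamma a * Complex.Gamma c / Complex.Gamma (a + c) := by
  have hd : ∀ x ∈ Set.univ, HasDerivWithinAt sg (Real.exp x / (1 + Real.exp x) ^ 2) Set.univ x :=
    fun x _ => (hasDerivAt_sg x).hasDerivWithinAt
  have := integral_image_eq_integral_abs_deriv_smul MeasurableSet.univ hd sg_injOn
    (fun x : ℝ => (x : ℂ) ^ (a - 1) * ((1:ℂ) - (x:ℝ)) ^ (c - 1))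
  rw [sg_image] at this
  simp_rw [key_eq] at this
  rw [MeasureTheory.setIntegral_univ] at this
  rw [← this]
  have hbeta : Complex.betaIntegral a c
      = Complex.Gamma a * Complex.Gamma c / Complex.Gamma (a + c) := by
    have hne : Complex.Gamma (a + c) ≠ 0 := by
      apply Complex.Gamma_ne_zero
      intro m h
      have : (a + c).re = -(m : ℝ) := by rw [h]; simp
      rw [Complex.add_re] at this
      have hm : (0:ℝ) ≤ m := Nat.cast_nonneg m
      linarith
    rw [eq_div_iff hne]
    rw [mul_comm, ← Complex.Gamma_mul_Gamma_eq_betaIntegral ha hc]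
  rw [← hbeta, Complex.betaIntegral, intervalIntegral.integral_of_le zero_le_one,
    ← MeasureTheory.integral_Ioc_eq_integral_Ioo]

lemma gg_integrable {a c : ℂ} (ha : 0 < a.re) (hc : 0 < c.re) :
    Integrable (gg a c) := by
  have hd : ∀ x ∈ Set.univ, HasDerivWithinAt sg (Real.exp x / (1 + Real.exp x) ^ 2) Set.univ x :=
    fun x _ => (hasDerivAt_sg x).hasDerivWithinAt
  have h0 : IntegrableOn (fun x : ℝ => (x : ℂ) ^ (a - 1) * ((1:ℂ) - (x:ℝ)) ^ (c - 1))
      (Set.Ioo 0 1) := by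
    have := (Complex.betaIntegral_convergent ha hc)
    rw [intervalIntegrable_iff_integrableOn_Ioc_of_le zero_le_one] at this
    exact this.mono_set Set.Ioo_subset_Ioc_self
  have := (integrableOn_image_iff_integrableOn_abs_deriv_smul MeasurableSet.univ hd sg_injOn
    (fun x : ℝ => (x : ℂ) ^ (a - 1) * ((1:ℂ) - (x:ℝ)) ^ (c - 1))).mp (by rwa [sg_image])
  simp_rw [key_eq] at this
  rwa [integrableOn_univ] at this

lemma gg_continuous (a c : ℂ) : Continuous (gg a c) := by
  apply Complex.continuous_exp.comp
  have h1 : Continuous fun s : ℝ => Real.log (1 + Real.exp s) :=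
    (continuous_const.add Real.continuous_exp).log (fun x => (by positivity : (1:ℝ) + Real.exp x ≠ 0))
  fun_prop

lemma gg_shift (a c : ℂ) (y : ℝ) (s : ℝ) :
    gg (a + Complex.I * y) (c - Complex.I * y) s
      = gg a c s * Complex.exp (Complex.I * y * s) := by
  rw [gg, gg, ← Complex.exp_add]; congr 1; ring

lemma re_vert (a : ℂ) (y : ℝ) : (a + Complex.I * y).re = a.re := by
  simp [Complex.add_re, Complex.mul_re]

lemma re_vert' (c : ℂ) (y : ℝ) : (c - Complex.I * y).re = c.re := by
  simp [Complex.sub_re, Complex.mul_re]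

lemma F_eq {a c : ℂ} (ha : 0 < a.re) (hc : 0 < c.re) (y : ℝ) :
    ∫ s : ℝ, gg a c s * Complex.exp (Complex.I * y * s)
      = Complex.Gamma (a + Complex.I * y) * Complex.Gamma (c - Complex.I * y)
        / Complex.Gamma (a + c) := by
  have ha' : 0 < (a + Complex.I * y).re := by rwa [re_vert]
  have hc' : 0 < (c - Complex.I * y).re := by rwa [re_vert']
  have := gg_integral ha' hc'
  simp_rw [gg_shift] at this
  rw [this]
  congr 2
  ring

lemma Gamma_nonzero {a : ℂ} (ha : 0 < a.re) : Complex.Gamma a ≠ 0 := by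
  apply Complex.Gamma_ne_zero
  intro m h
  have : a.re = -(m : ℝ) := by rw [h]; simp
  have hm : (0:ℝ) ≤ m := Nat.cast_nonneg m
  linarith

lemma P_bound {a c : ℂ} (ha : 0 < a.re) (hc : 0 < c.re) (y : ℝ) :
    ‖Complex.Gamma (a + Complex.I * y) * Complex.Gamma (c - Complex.I * y)‖
      ≤ ‖Complex.Gamma (a + c)‖ * ∫ s : ℝ, ‖gg a c s‖ := by
  have h := F_eq ha hc y
  have hne := Gamma_nonzero (by rw [Complex.add_re]; positivity : 0 < (a+c).re)
  have : Complex.Gamma (a + Complex.I * y) * Complex.Gamma (c - Complex.I * y)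
      = Complex.Gamma (a + c) * ∫ s : ℝ, gg a c s * Complex.exp (Complex.I * y * s) := by
    rw [h]; field_simp
  rw [this, norm_mul]
  refine mul_le_mul_of_nonneg_left ?_ (norm_nonneg _)
  calc ‖∫ s : ℝ, gg a c s * Complex.exp (Complex.I * y * s)‖
      ≤ ∫ s : ℝ, ‖gg a c s * Complex.exp (Complex.I * y * s)‖ :=
        norm_integral_le_integral_norm _
    _ = ∫ s : ℝ, ‖gg a c s‖ := by
        congr 1; funext s
        rw [norm_mul]
        have : ‖Complex.exp (Complex.I * y * s)‖ = 1 := by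
          rw [Complex.norm_exp]
          simp [Complex.mul_re, Complex.mul_im]
        rw [this, mul_one]

lemma cont_vert {a : ℂ} (ha : 0 < a.re) :
    Continuous fun y : ℝ => Complex.Gamma (a + Complex.I * y) := by
  rw [continuous_iff_continuousAt]
  intro y
  have hdiff : DifferentiableAt ℂ Complex.Gamma (a + Complex.I * y) := by
    apply Complex.differentiableAt_Gamma
    intro m h
    have : (a + Complex.I * y).re = -(m : ℝ) := by rw [h]; simp
    rw [re_vert] at this
    have hm : (0:ℝ) ≤ m := Nat.cast_nonneg m
    linarith
  have h2 : ContinuousAt (fun y : ℝ => a + Complex.I * (y:ℂ)) y := by fun_prop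
  exact ContinuousAt.comp (f := fun y : ℝ => a + Complex.I * (y:ℂ)) hdiff.continuousAt h2

lemma cont_vert' {c : ℂ} (hc : 0 < c.re) :
    Continuous fun y : ℝ => Complex.Gamma (c - Complex.I * y) := by
  rw [continuous_iff_continuousAt]
  intro y
  have hdiff : DifferentiableAt ℂ Complex.Gamma (c - Complex.I * y) := by
    apply Complex.differentiableAt_Gamma
    intro m h
    have : (c - Complex.I * y).re = -(m : ℝ) := by rw [h]; simp
    rw [re_vert'] at this
    have hm : (0:ℝ) ≤ m := Nat.cast_nonneg m
    linarith
  have h2 : ContinuousAt (fun y : ℝ => c - Complex.I * (y:ℂ)) y := by fun_prop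
  exact ContinuousAt.comp (f := fun y : ℝ => c - Complex.I * (y:ℂ)) hdiff.continuousAt h2

lemma P_cont {a c : ℂ} (ha : 0 < a.re) (hc : 0 < c.re) :
    Continuous fun y : ℝ =>
      Complex.Gamma (a + Complex.I * y) * Complex.Gamma (c - Complex.I * y) :=
  (cont_vert ha).mul (cont_vert' hc)

lemma P_integrable {a c : ℂ} (ha : 0 < a.re) (hc : 0 < c.re) :
    Integrable (fun y : ℝ =>
      Complex.Gamma (a + Complex.I * y) * Complex.Gamma (c - Complex.I * y)) := by
  set C : ℝ := ‖Complex.Gamma (a + 2 + c)‖ * ∫ s : ℝ, ‖gg (a + 2) c s‖ with hC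
  have ha2 : 0 < (a + 2).re := by rw [Complex.add_re]; norm_num; linarith
  have hCnn : 0 ≤ C := by
    apply mul_nonneg (norm_nonneg _)
    exact integral_nonneg fun s => norm_nonneg _
  have hmaj : Integrable (fun y : ℝ => C * (a.re ^ 2 + (a.im + y) ^ 2)⁻¹) := by
    have h1 : Integrable (fun y : ℝ => (1 + ((a.im + y) / a.re) ^ 2)⁻¹) := by
      have := (integrable_inv_one_add_sq.comp_div (R := a.re) ha.ne').comp_add_left a.im
      simpa using this
    have h2 := h1.const_mul (C * (a.re ^ 2)⁻¹)
    apply h2.congr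
    apply Filter.Eventually.of_forall
    intro y
    have hre : a.re ≠ 0 := ha.ne'
    field_simp
  apply Integrable.mono' hmaj (P_cont ha hc).aestronglyMeasurable
  apply Filter.Eventually.of_forall
  intro y
  obtain ⟨z, hz⟩ : ∃ z : ℂ, z = a + Complex.I * y := ⟨_, rfl⟩
  have hzre : z.re = a.re := by rw [hz]; exact re_vert a y
  have hzim : z.im = a.im + y := by rw [hz]; simp [Complex.add_im, Complex.mul_im]
  have hz0 : z ≠ 0 := fun h => by rw [h] at hzre; simp at hzre; linarith
  have hz10 : z + 1 ≠ 0 := fun h => by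
    have : (z + 1).re = 0 := by rw [h]; simp
    rw [Complex.add_re, hzre] at this; simp at this; linarith
  have hGam : Complex.Gamma (a + 2 + Complex.I * y) = (z + 1) * (z * Complex.Gamma z) := by
    have e1 : a + 2 + Complex.I * y = (z + 1) + 1 := by rw [hz]; ring
    rw [e1, Complex.Gamma_add_one _ hz10]
    congr 1
    exact Complex.Gamma_add_one _ hz0
  have hb := P_bound ha2 hc y
  rw [hGam, ← hC] at hb
  have hnorm : ‖(z + 1) * (z * Complex.Gamma z) * Complex.Gamma (c - Complex.I * y)‖
      = ‖z + 1‖ * ‖z‖ * ‖Complex.Gamma z * Complex.Gamma (c - Complex.I * y)‖ := by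
    simp only [norm_mul]; ring
  rw [hnorm] at hb
  have habs : ‖z‖ ^ 2 = a.re ^ 2 + (a.im + y) ^ 2 := by
    rw [← hzre, ← hzim, Complex.sq_norm, Complex.normSq_apply]
    ring
  have hz1_ge : ‖z‖ ≤ ‖z + 1‖ := by
    rw [Complex.norm_def, Complex.norm_def]
    apply Real.sqrt_le_sqrt
    rw [Complex.normSq_apply, Complex.normSq_apply, Complex.add_re, Complex.add_im,
      Complex.one_re, Complex.one_im, hzre, add_zero]
    nlinarith [sq_nonneg z.im]
  have hSpos : (0:ℝ) < a.re ^ 2 + (a.im + y) ^ 2 := by positivity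
  have hgoal : ‖Complex.Gamma (a + Complex.I * y) * Complex.Gamma (c - Complex.I * y)‖
      = ‖Complex.Gamma z * Complex.Gamma (c - Complex.I * y)‖ := by rw [hz]
  rw [hgoal, mul_comm C _, ← div_eq_inv_mul, le_div_iff₀ hSpos]
  set N := ‖Complex.Gamma z * Complex.Gamma (c - Complex.I * y)‖ with hN
  have hNnn : 0 ≤ N := norm_nonneg _
  calc N * (a.re ^ 2 + (a.im + y) ^ 2) = ‖z‖ * ‖z‖ * N := by rw [← habs]; ring
    _ ≤ ‖z + 1‖ * ‖z‖ * N :=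
        mul_le_mul_of_nonneg_right (mul_le_mul_of_nonneg_right hz1_ge (norm_nonneg z)) hNnn
    _ ≤ C := hb

open FourierTransform

lemma fourier_gg_eq {a c : ℂ} (ha : 0 < a.re) (hc : 0 < c.re) (ξ : ℝ) :
    𝓕 (gg a c) ξ
      = Complex.Gamma (a + Complex.I * ((-(2 * π)) * ξ : ℝ))
          * Complex.Gamma (c - Complex.I * ((-(2 * π)) * ξ : ℝ))
          / Complex.Gamma (a + c) := by
  rw [Real.fourier_real_eq_integral_exp_smul, ← F_eq ha hc ((-(2 * π)) * ξ)]
  congr 1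
  funext s
  rw [smul_eq_mul, mul_comm]
  congr 1
  push_cast
  ring

lemma fourier_gg_integrable {a c : ℂ} (ha : 0 < a.re) (hc : 0 < c.re) :
    Integrable (𝓕 (gg a c)) := by
  have h1 : Integrable (fun y : ℝ =>
      Complex.Gamma (a + Complex.I * y) * Complex.Gamma (c - Complex.I * y)
        / Complex.Gamma (a + c)) := (P_integrable ha hc).div_const _
  have h2π : (-(2 * π) : ℝ) ≠ 0 := by
    have := Real.pi_pos; intro h; nlinarith
  have h2 := h1.comp_mul_left' h2π
  apply h2.congr
  apply Filter.Eventually.of_forall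
  intro ξ
  exact (fourier_gg_eq ha hc ξ).symm

lemma inversion_step {a c : ℂ} (ha : 0 < a.re) (hc : 0 < c.re) (t : ℝ) :
    ∫ y : ℝ, Complex.Gamma (a + Complex.I * y) * Complex.Gamma (c - Complex.I * y)
        * Complex.exp (Complex.I * y * t)
      = 2 * π * Complex.Gamma (a + c) * gg a c (-t) := by
  have hne := Gamma_nonzero (by rw [Complex.add_re]; positivity : 0 < (a + c).re)
  have h2π : (-(2 * π) : ℝ) ≠ 0 := by
    have := Real.pi_pos; intro h; nlinarith
  set h : ℝ → ℂ := fun y =>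
    Complex.Gamma (a + Complex.I * y) * Complex.Gamma (c - Complex.I * y)
      / Complex.Gamma (a + c) * Complex.exp (Complex.I * y * t) with hh
  have step1 : ∀ y : ℝ,
      Complex.Gamma (a + Complex.I * y) * Complex.Gamma (c - Complex.I * y)
        * Complex.exp (Complex.I * y * t) = Complex.Gamma (a + c) * h y := by
    intro y; rw [hh]; field_simp
  simp_rw [step1]
  rw [integral_const_mul]
  have step2 : (∫ x : ℝ, h ((-(2 * π)) * x)) = |(-(2 * π) : ℝ)⁻¹| • ∫ y : ℝ, h y :=
    Measure.integral_comp_mul_left h (-(2 * π))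
  have habs : |(-(2 * π) : ℝ)⁻¹| = (2 * π)⁻¹ := by
    rw [abs_inv, abs_neg, abs_of_pos (by positivity)]
  have step3 : (∫ x : ℝ, h ((-(2 * π)) * x)) = 𝓕 (𝓕 (gg a c)) t := by
    rw [Real.fourier_real_eq_integral_exp_smul]
    congr 1
    funext x
    rw [hh, smul_eq_mul, fourier_gg_eq ha hc x, mul_comm]
    congr 1
    push_cast
    ring
  have step4 : 𝓕 (𝓕 (gg a c)) t = gg a c (-t) := by
    have hinv := MeasureTheory.Integrable.fourierInv_fourier_eq (gg_integrable ha hc) (fourier_gg_integrable ha hc)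
      ((gg_continuous a c).continuousAt (x := -t))
    rw [← hinv, Real.fourierInv_eq_fourier_neg, neg_neg]
  have h5 : ((2 * π : ℝ)⁻¹) • (∫ y : ℝ, h y) = gg a c (-t) := by
    rw [← habs, ← step2, step3, step4]
  have h6 : (∫ y : ℝ, h y) = (2 * π : ℝ) • gg a c (-t) := by
    rw [← h5, smul_smul, mul_inv_cancel₀ (by positivity), one_smul]
  rw [h6, Complex.real_smul]
  push_cast
  ring

lemma gg_neg_mul (α β γ δ : ℂ) (t : ℝ) :
    gg α γ (-t) * gg β δ t = gg (β + γ) (α + δ) t := by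
  rw [gg, gg, gg, ← Complex.exp_add]
  congr 1
  have h1 : (1:ℝ) + Real.exp (-t) = Real.exp (-t) * (1 + Real.exp t) := by
    rw [Real.exp_neg]
    have := Real.exp_pos t
    field_simp
    ring
  have hlog : Real.log (1 + Real.exp (-t)) = Real.log (1 + Real.exp t) - t := by
    rw [h1, Real.log_mul (Real.exp_ne_zero _) (by positivity), Real.log_exp]
    ring
  rw [hlog]
  push_cast
  ring

/-- **Barnes' first lemma.** For complex `α, β, γ, δ` with positive real parts,
`∫_{-i∞}^{i∞} Γ(α+t)Γ(β+t)Γ(γ-t)Γ(δ-t) dt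
  = 2πi · Γ(α+γ)Γ(α+δ)Γ(β+γ)Γ(β+δ)/Γ(α+β+γ+δ)`,
where the integral along the imaginary axis is `∫_ℝ Γ(α+iy)Γ(β+iy)Γ(γ-iy)Γ(δ-iy) · i dy`. -/
theorem barnes_first_lemma (α β γ δ : ℂ)
    (hα : 0 < α.re) (hβ : 0 < β.re) (hγ : 0 < γ.re) (hδ : 0 < δ.re) :
    (Complex.I *
      ∫ y : ℝ,
        Complex.Gamma (α + Complex.I * y) * Complex.Gamma (β + Complex.I * y) *
          Complex.Gamma (γ - Complex.I * y) * Complex.Gamma (δ - Complex.I * y)) =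
      2 * (Real.pi : ℂ) * Complex.I *
        (Complex.Gamma (α + γ) * Complex.Gamma (α + δ) * Complex.Gamma (β + γ) *
          Complex.Gamma (β + δ) / Complex.Gamma (α + β + γ + δ)) := by
  have hβδ : 0 < (β + δ).re := by rw [Complex.add_re]; positivity
  have hαγ : 0 < (α + γ).re := by rw [Complex.add_re]; positivity
  have hneβδ : Complex.Gamma (β + δ) ≠ 0 := Gamma_nonzero hβδ
  set F : ℝ → ℝ → ℂ := fun y t =>
    Complex.Gamma (α + Complex.I * y) * Complex.Gamma (γ - Complex.I * y) *
      (gg β δ t * Complex.exp (Complex.I * y * t)) with hF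
  have hpoint : ∀ y : ℝ,
      Complex.Gamma (α + Complex.I * y) * Complex.Gamma (β + Complex.I * y) *
        Complex.Gamma (γ - Complex.I * y) * Complex.Gamma (δ - Complex.I * y)
      = Complex.Gamma (β + δ) * ∫ t : ℝ, F y t := by
    intro y
    rw [hF]
    simp only
    rw [integral_const_mul]
    have : (∫ t : ℝ, gg β δ t * Complex.exp (Complex.I * y * t))
        = Complex.Gamma (β + Complex.I * y) * Complex.Gamma (δ - Complex.I * y)
          / Complex.Gamma (β + δ) := F_eq hβ hδ y
    rw [this]
    field_simp
  simp_rw [hpoint]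
  rw [integral_const_mul]
  -- Fubini
  have hInt : Integrable (Function.uncurry F) ((volume : Measure ℝ).prod volume) := by
    have hcont : Continuous (Function.uncurry F) := by
      apply Continuous.mul (((P_cont hα hγ)).comp continuous_fst)
      apply Continuous.mul ((gg_continuous β δ).comp continuous_snd)
      apply Complex.continuous_exp.comp
      fun_prop
    have hdom : Integrable (fun p : ℝ × ℝ =>
        ‖Complex.Gamma (α + Complex.I * p.1) * Complex.Gamma (γ - Complex.I * p.1)‖
          * ‖gg β δ p.2‖) ((volume : Measure ℝ).prod volume) :=
      Integrable.mul_prod (P_integrable hα hγ).norm (gg_integrable hβ hδ).norm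
    apply Integrable.mono' hdom hcont.aestronglyMeasurable
    apply Filter.Eventually.of_forall
    intro p
    have hexp : ‖Complex.exp (Complex.I * p.1 * p.2)‖ = 1 := by
      rw [Complex.norm_exp]
      simp [Complex.mul_re, Complex.mul_im]
    simp only [Function.uncurry, hF, norm_mul, hexp, mul_one]
    exact le_of_eq (by ring)
  rw [integral_integral_swap hInt]
  -- inner integral via inversion
  have hinner : ∀ t : ℝ, (∫ y : ℝ, F y t)
      = gg β δ t * (2 * (π:ℂ) * Complex.Gamma (α + γ) * gg α γ (-t)) := by
    intro t
    rw [← inversion_step hα hγ t, ← integral_const_mul]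
    congr 1
    funext y
    rw [hF]
    simp only
    ring
  simp_rw [hinner]
  have hlast : (∫ t : ℝ, gg β δ t * gg α γ (-t))
      = Complex.Gamma (β + γ) * Complex.Gamma (α + δ) / Complex.Gamma (α + β + γ + δ) := by
    have : ∀ t : ℝ, gg β δ t * gg α γ (-t) = gg (β + γ) (α + δ) t := by
      intro t; rw [mul_comm]; exact gg_neg_mul α β γ δ t
    simp_rw [this]
    rw [gg_integral (by rw [Complex.add_re]; positivity) (by rw [Complex.add_re]; positivity),
      show β + γ + (α + δ) = α + β + γ + δ from by ring]
  have hcomm : ∀ y : ℝ, gg β δ y * (2 * (π:ℂ) * Complex.Gamma (α + γ) * gg α γ (-y))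
      = (2 * (π:ℂ) * Complex.Gamma (α + γ)) * (gg β δ y * gg α γ (-y)) := fun y => by ring
  simp_rw [hcomm]
  rw [integral_const_mul, hlast]
  ring
end

section
/- Barnes' integral with exponential factor: for a complex number α with Re α > 0 and a real number u > 0, ∫_{−i∞}^{i∞} Γ(α+t) Γ(α−t) u^{2t} dt = 2πi · Γ(2α) · (u+u^{−1})^{−2α}, where the integral along the imaginary axis means ∫_{−∞}^{∞} Γ(α+iy)Γ(α−iy) u^{2iy} · i dy. -/
open MeasureTheory Complex Set

lemma norm_Gamma_le {s : ℂ} (hs : 0 < s.re) : ‖Complex.Gamma s‖ ≤ Real.Gamma s.re := by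
  rw [Complex.Gamma_eq_integral hs, Complex.GammaIntegral,
    Real.Gamma_eq_integral hs]
  refine (norm_integral_le_integral_norm _).trans_eq ?_
  refine setIntegral_congr_fun measurableSet_Ioi fun x hx => ?_
  simp only [norm_mul, Complex.norm_cpow_eq_rpow_re_of_pos hx]
  rw [Complex.norm_real, Real.norm_eq_abs, abs_of_pos (Real.exp_pos _)]
  simp

lemma norm_Gamma_le_div {s : ℂ} (hs : 0 < s.re) (hy : s.im ≠ 0) :
    ‖Complex.Gamma s‖ ≤ Real.Gamma (s.re + 1) / |s.im| := by
  have hs0 : s ≠ 0 := fun h => by simp [h] at hy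
  have h1 : Complex.Gamma (s + 1) = s * Complex.Gamma s := Complex.Gamma_add_one s hs0
  have h2 : ‖Complex.Gamma (s + 1)‖ ≤ Real.Gamma (s.re + 1) := by
    simpa using norm_Gamma_le (s := s + 1) (by simp; positivity)
  rw [h1, norm_mul] at h2
  rw [le_div_iff₀ (abs_pos.mpr hy)]
  calc ‖Complex.Gamma s‖ * |s.im| ≤ ‖Complex.Gamma s‖ * ‖s‖ := by
        gcongr; exact Complex.abs_im_le_norm s
    _ = ‖s‖ * ‖Complex.Gamma s‖ := mul_comm _ _
    _ ≤ _ := h2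

lemma continuous_Gamma_vert (a : ℂ) (ha : 0 < a.re) (c : ℝ) :
    Continuous fun y : ℝ => Complex.Gamma (a + c * Complex.I * y) := by
  rw [continuous_iff_continuousAt]
  intro y
  refine (Complex.differentiableAt_Gamma _ fun m => ?_).continuousAt.comp (by fun_prop)
  intro h
  have := congrArg Complex.re h
  simp [Complex.add_re, Complex.mul_re] at this
  have : a.re = -(m : ℝ) := by simpa using this
  have hm : (0:ℝ) ≤ m := Nat.cast_nonneg m
  linarith [this ▸ ha]

set_option maxHeartbeats 1000000 in
lemma integrable_Gamma_mul {a b : ℂ} (ha : 0 < a.re) (hb : 0 < b.re) :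
    Integrable fun y : ℝ =>
      Complex.Gamma (a + Complex.I * y) * Complex.Gamma (b - Complex.I * y) := by
  set Ga := Real.Gamma a.re with hGa
  set Gb := Real.Gamma b.re with hGb
  set Ga1 := Real.Gamma (a.re + 1) with hGa1
  set Gb1 := Real.Gamma (b.re + 1) with hGb1
  have hGa0 : 0 < Ga := Real.Gamma_pos_of_pos ha
  have hGb0 : 0 < Gb := Real.Gamma_pos_of_pos hb
  have hGa10 : 0 < Ga1 := Real.Gamma_pos_of_pos (by positivity)
  have hGb10 : 0 < Gb1 := Real.Gamma_pos_of_pos (by positivity)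
  set R : ℝ := 2 * |a.im| + 2 * |b.im| + 1 with hR
  have hR1 : 1 ≤ R := by have := abs_nonneg a.im; have := abs_nonneg b.im; linarith
  set C : ℝ := max (Ga * Gb * (1 + R ^ 2)) (8 * Ga1 * Gb1) with hC
  have hcont : Continuous fun y : ℝ =>
      Complex.Gamma (a + Complex.I * y) * Complex.Gamma (b - Complex.I * y) := by
    have h1 := continuous_Gamma_vert a ha 1
    have h2 := continuous_Gamma_vert b hb (-1)
    have h1' : Continuous fun y : ℝ => Complex.Gamma (a + Complex.I * y) := by
      convert h1 using 3 with y; push_cast; ring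
    have h2' : Continuous fun y : ℝ => Complex.Gamma (b - Complex.I * y) := by
      convert h2 using 3 with y; push_cast; ring
    exact h1'.mul h2'
  refine (integrable_inv_one_add_sq.const_mul C).mono' hcont.aestronglyMeasurable
    (Filter.Eventually.of_forall fun y => ?_)
  have rea : (a + Complex.I * (y:ℂ)).re = a.re := by simp
  have reb : (b - Complex.I * (y:ℂ)).re = b.re := by simp
  have ima : (a + Complex.I * (y:ℂ)).im = a.im + y := by simp
  have imb : (b - Complex.I * (y:ℂ)).im = b.im - y := by simp
  have h1y : (0:ℝ) < 1 + y ^ 2 := by positivity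
  rw [norm_mul, ← div_eq_mul_inv, le_div_iff₀ h1y]
  set na := ‖Complex.Gamma (a + Complex.I * (y:ℂ))‖ with hna
  set nb := ‖Complex.Gamma (b - Complex.I * (y:ℂ))‖ with hnb
  have hna0 : 0 ≤ na := norm_nonneg _
  have hnb0 : 0 ≤ nb := norm_nonneg _
  rcases le_or_gt |y| R with h | h
  · -- bounded region
    have h1 : na ≤ Ga := by
      have := norm_Gamma_le (s := a + Complex.I * (y:ℂ)) (by rw [rea]; exact ha)
      rwa [rea] at this
    have h2 : nb ≤ Gb := by
      have := norm_Gamma_le (s := b - Complex.I * (y:ℂ)) (by rw [reb]; exact hb)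
      rwa [reb] at this
    have hy2 : y ^ 2 ≤ R ^ 2 := by
      have h' := _root_.sq_abs y
      nlinarith [abs_nonneg y]
    have hCle : Ga * Gb * (1 + R ^ 2) ≤ C := le_max_left _ _
    have k1 := mul_le_mul_of_nonneg_right (mul_le_mul h1 h2 hnb0 hGa0.le) h1y.le
    have k2 := mul_le_mul_of_nonneg_left hy2 (mul_pos hGa0 hGb0).le
    nlinarith [k1, k2]
  · -- tail region
    have hy1 : 1 < |y| := lt_of_le_of_lt hR1 h
    have hy0 : (0:ℝ) < |y| := by linarith
    have hima : |y| / 2 ≤ |a.im + y| := by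
      have h' := abs_add_le (a.im + y) (-a.im)
      rw [show a.im + y + -a.im = y from by ring, abs_neg] at h'
      have haim : 2 * |a.im| ≤ R - 1 := by rw [hR]; have := abs_nonneg b.im; linarith
      linarith
    have himb : |y| / 2 ≤ |b.im - y| := by
      have h' := abs_add_le (b.im - y) (-b.im)
      rw [show b.im - y + -b.im = -y from by ring, abs_neg, abs_neg] at h'
      have hbim : 2 * |b.im| ≤ R - 1 := by rw [hR]; have := abs_nonneg a.im; linarith
      linarith
    have hima0 : (0:ℝ) < |a.im + y| := by linarith
    have himb0 : (0:ℝ) < |b.im - y| := by linarith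
    have h1 : na * |a.im + y| ≤ Ga1 := by
      have h1' : na ≤ Ga1 / |a.im + y| := by
        have := norm_Gamma_le_div (s := a + Complex.I * (y:ℂ)) (by rw [rea]; exact ha)
          (by rw [ima]; exact abs_pos.mp hima0)
        rwa [rea, ima] at this
      rwa [le_div_iff₀ hima0] at h1'
    have h2 : nb * |b.im - y| ≤ Gb1 := by
      have h2' : nb ≤ Gb1 / |b.im - y| := by
        have := norm_Gamma_le_div (s := b - Complex.I * (y:ℂ)) (by rw [reb]; exact hb)
          (by rw [imb]; exact abs_pos.mp himb0)
        rwa [reb, imb] at this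
      rwa [le_div_iff₀ himb0] at h2'
    have h3 : na * (|y| / 2) ≤ Ga1 :=
      le_trans (mul_le_mul_of_nonneg_left hima hna0) h1
    have h4 : nb * (|y| / 2) ≤ Gb1 :=
      le_trans (mul_le_mul_of_nonneg_left himb hnb0) h2
    have hsq : |y| * |y| = y ^ 2 := by rw [← _root_.sq_abs y]; ring
    have key := mul_le_mul h3 h4 (by positivity) hGa10.le
    have h5 : na * nb * y ^ 2 ≤ 4 * (Ga1 * Gb1) := by
      have hkey : na * (|y| / 2) * (nb * (|y| / 2)) = na * nb * (|y| * |y|) / 4 := by ring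
      rw [hkey, hsq] at key
      linarith
    have hCle : 8 * Ga1 * Gb1 ≤ C := le_max_right _ _
    have hy2' : 1 ≤ y ^ 2 := by rw [← hsq]; nlinarith
    have h6 : na * nb ≤ na * nb * y ^ 2 := by nlinarith [mul_nonneg hna0 hnb0]
    rw [show na * nb * (1 + y ^ 2) = na * nb + na * nb * y ^ 2 from by ring]
    linarith

section CoV
variable {a s : ℂ}

lemma cov_pointwise (hs : 0 < s.re) {t : ℝ} (ht : t ∈ Ioo (0:ℝ) 1) :
    |((1 - t) ^ 2)⁻¹| • ((↑(t / (1 - t)) : ℂ) ^ (s - 1) •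
        ((1 : ℂ) + ↑(t / (1 - t))) ^ (-a)) =
      (t : ℂ) ^ (s - 1) * ((1 : ℂ) - t) ^ (a - s - 1) := by
  obtain ⟨ht0, ht1⟩ := ht
  have hmt : (0:ℝ) < 1 - t := by linarith
  set z : ℂ := ((1 - t : ℝ) : ℂ) with hz
  have hz0 : z ≠ 0 := Complex.ofReal_ne_zero.mpr hmt.ne'
  have harg : z.arg ≠ Real.pi := by
    rw [hz, Complex.arg_ofReal_of_nonneg hmt.le]
    exact (Real.pi_ne_zero).symm
  have hC : (1:ℂ) - (t:ℂ) ≠ 0 := by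
    have : ((1 - t : ℝ) : ℂ) ≠ 0 := Complex.ofReal_ne_zero.mpr hmt.ne'
    push_cast at this
    exact this
  have e1 : ((1 : ℂ) + ↑(t / (1 - t))) = z⁻¹ := by
    rw [hz]
    push_cast
    field_simp
    ring
  have e2 : (↑(t / (1 - t)) : ℂ) ^ (s - 1) = (t : ℂ) ^ (s - 1) * (z ^ (s - 1))⁻¹ := by
    rw [div_eq_mul_inv, Complex.ofReal_mul, Complex.mul_cpow_ofReal_nonneg ht0.le
      (inv_nonneg.mpr hmt.le), Complex.ofReal_inv, Complex.inv_cpow _ _ harg]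
  have e3 : (z⁻¹) ^ (-a) = z ^ a := by
    rw [Complex.inv_cpow _ _ harg, ← Complex.cpow_neg, neg_neg]
  have hcoe : ((((1 - t) ^ 2)⁻¹ : ℝ) : ℂ) = z ^ (-2 : ℂ) := by
    rw [Complex.cpow_neg, show (2:ℂ) = ((2:ℕ):ℂ) from by norm_num, Complex.cpow_natCast, hz]
    push_cast
    ring
  have e4 : ((1 : ℂ) - t) ^ (a - s - 1) = z ^ (-2:ℂ) * (z ^ (s - 1))⁻¹ * z ^ a := by
    rw [← Complex.cpow_neg, ← Complex.cpow_add _ _ hz0, ← Complex.cpow_add _ _ hz0]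
    rw [hz]
    push_cast
    congr 1
    ring
  rw [abs_of_pos (by positivity), e1, e2, e3, smul_eq_mul, Complex.real_smul, hcoe, e4]
  ring

lemma cov_deriv : ∀ t ∈ Ioo (0:ℝ) 1,
    HasDerivWithinAt (fun t : ℝ => t / (1 - t)) (((1 - t) ^ 2)⁻¹) (Ioo 0 1) t := by
  intro t ht
  have hmt : (1:ℝ) - t ≠ 0 := by have := ht.2; intro h; simp only [sub_eq_zero] at h; linarith
  have h := (hasDerivAt_id t).div ((hasDerivAt_id t).const_sub 1) hmt
  refine (h.hasDerivWithinAt (s := Ioo 0 1)).congr_deriv ?_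
  simp only [id_eq]
  ring

lemma cov_inj : InjOn (fun t : ℝ => t / (1 - t)) (Ioo 0 1) := by
  intro x hx y hy H
  have hx1 : (1:ℝ) - x ≠ 0 := by have := hx.2; intro h; rw [sub_eq_zero] at h; linarith
  have hy1 : (1:ℝ) - y ≠ 0 := by have := hy.2; intro h; rw [sub_eq_zero] at h; linarith
  field_simp at H
  linarith

lemma cov_image : (fun t : ℝ => t / (1 - t)) '' (Ioo 0 1) = Ioi 0 := by
  ext x
  constructor
  · rintro ⟨t, ht, rfl⟩
    exact div_pos ht.1 (by linarith [ht.2])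
  · intro hx
    simp only [mem_Ioi] at hx
    refine ⟨x / (1 + x), ⟨div_pos hx (by linarith), (div_lt_one (by linarith)).mpr (by linarith)⟩, ?_⟩
    have h1x : (1:ℝ) + x ≠ 0 := by positivity
    field_simp
    ring

lemma cov_integrableOn (hs : 0 < s.re) (hsa : 0 < (a - s).re) :
    IntegrableOn (fun t : ℝ => (t : ℂ) ^ (s - 1) • ((1 : ℂ) + t) ^ (-a)) (Ioi 0) := by
  have hbeta : IntegrableOn
      (fun x : ℝ => (x : ℂ) ^ (s - 1) * (1 - (x : ℂ)) ^ ((a - s) - 1)) (Ioo 0 1) := by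
    have := (Complex.betaIntegral_convergent hs hsa)
    rw [intervalIntegrable_iff_integrableOn_Ioc_of_le zero_le_one] at this
    exact this.mono_set Ioo_subset_Ioc_self
  rw [← cov_image, integrableOn_image_iff_integrableOn_abs_deriv_smul measurableSet_Ioo
    cov_deriv cov_inj]
  refine hbeta.congr_fun (fun t ht => ?_) measurableSet_Ioo
  exact (cov_pointwise (a := a) hs ht).symm

lemma cov_mellin (hs : 0 < s.re) (hsa : 0 < (a - s).re) :
    mellin (fun x : ℝ => ((1 : ℂ) + x) ^ (-a)) s = Complex.betaIntegral s (a - s) := by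
  rw [mellin, ← cov_image, integral_image_eq_integral_abs_deriv_smul measurableSet_Ioo
    cov_deriv cov_inj, Complex.betaIntegral,
    intervalIntegral.integral_of_le zero_le_one, MeasureTheory.integral_Ioc_eq_integral_Ioo]
  refine setIntegral_congr_fun measurableSet_Ioo (fun t ht => ?_)
  exact cov_pointwise (a := a) hs ht

end CoV

lemma re_two_mul_sub (α s : ℂ) : (2 * α - s).re = 2 * α.re - s.re := by
  simp [Complex.sub_re, Complex.mul_re]

lemma mellin_f (α : ℂ) {s : ℂ} (hs : 0 < s.re) (hs2 : s.re < 2 * α.re) :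
    mellin (fun x : ℝ => Complex.Gamma (2 * α) * ((1 : ℂ) + x) ^ (-(2 * α))) s
      = Complex.Gamma s * Complex.Gamma (2 * α - s) := by
  have hsa : 0 < (2 * α - s).re := by rw [re_two_mul_sub]; linarith
  have h1 : mellin (fun x : ℝ => Complex.Gamma (2 * α) * ((1 : ℂ) + x) ^ (-(2 * α))) s
      = Complex.Gamma (2 * α) * mellin (fun x : ℝ => ((1 : ℂ) + x) ^ (-(2 * α))) s := by
    simpa [smul_eq_mul] using
      mellin_const_smul (fun x : ℝ => ((1 : ℂ) + x) ^ (-(2 * α))) s (Complex.Gamma (2 * α))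
  rw [h1, cov_mellin hs hsa, Complex.Gamma_mul_Gamma_eq_betaIntegral hs hsa,
    show s + (2 * α - s) = 2 * α from by ring]

/-- **Barnes' integral with exponential factor.** For complex `α` with `Re α > 0` and a
real `u > 0`, `∫_{-i∞}^{i∞} Γ(α+t)Γ(α-t) u^(2t) dt = 2πi · Γ(2α) · (u+u⁻¹)^(-2α)`,
where the integral along the imaginary axis is `∫_ℝ Γ(α+iy)Γ(α-iy) u^(2iy) · i dy`, and
powers of the positive reals `u` and `u + u⁻¹` are `r^s = exp (s log r)` with the real
logarithm. -/
theorem barnes_integral_exp (α : ℂ) (hα : 0 < α.re) (u : ℝ) (hu : 0 < u) :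
    (Complex.I *
      ∫ y : ℝ,
        Complex.Gamma (α + Complex.I * y) * Complex.Gamma (α - Complex.I * y) *
          (u : ℂ) ^ (2 * (Complex.I * y))) =
      2 * (Real.pi : ℂ) * Complex.I * Complex.Gamma (2 * α) *
        ((u : ℂ) + (u : ℂ)⁻¹) ^ (-2 * α) := by
  set f : ℝ → ℂ := fun x : ℝ => Complex.Gamma (2 * α) * ((1 : ℂ) + x) ^ (-(2 * α)) with hf
  set x : ℝ := (u ^ 2)⁻¹ with hxdef
  have hx : 0 < x := by positivity
  have hu0 : (u : ℂ) ≠ 0 := Complex.ofReal_ne_zero.mpr hu.ne'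
  have hα2 : α.re < 2 * α.re := by linarith
  -- Mellin convergence
  have hg : MellinConvergent (fun x : ℝ => ((1 : ℂ) + x) ^ (-(2 * α))) (α.re : ℂ) :=
    cov_integrableOn (a := 2 * α) (s := (α.re : ℂ))
      (by simpa using hα) (by rw [re_two_mul_sub]; simp; linarith)
  have hconv : MellinConvergent f (α.re : ℂ) := by
    simpa [hf, smul_eq_mul] using hg.const_smul (Complex.Gamma (2 * α))
  -- vertical integrability
  have hvert : Complex.VerticalIntegrable (mellin f) α.re := by
    refine (integrable_Gamma_mul (a := ((α.re : ℝ) : ℂ)) (b := 2 * α - α.re)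
      (by simpa using hα) (by rw [re_two_mul_sub]; simp; linarith)).congr
      (Filter.Eventually.of_forall fun y => ?_)
    have h1 : mellin f ((α.re : ℂ) + y * Complex.I)
        = Complex.Gamma ((α.re : ℂ) + y * Complex.I)
          * Complex.Gamma (2 * α - ((α.re : ℂ) + y * Complex.I)) := by
      refine mellin_f α ?_ ?_ <;> simp [hα, hα2]
    show Complex.Gamma ((α.re:ℂ) + Complex.I * y) * Complex.Gamma (2 * α - α.re - Complex.I * y)
      = mellin f ((α.re : ℂ) + y * Complex.I)
    rw [h1]
    congr 2 <;> ring
  -- continuity at x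
  have hct : ContinuousAt f x := by
    have hb : ContinuousAt (fun t : ℝ => (1 : ℂ) + t) x := by fun_prop
    have hcp : ContinuousAt (fun z : ℂ => z ^ (-(2 * α))) ((1 : ℂ) + x) :=
      continuousAt_cpow_const (by rw [Complex.mem_slitPlane_iff]; left; simp; positivity)
    exact continuousAt_const.mul
      (show ContinuousAt ((fun z : ℂ => z ^ (-(2 * α))) ∘ fun t : ℝ => (1 : ℂ) + t) x from
        ContinuousAt.comp (f := fun t : ℝ => (1 : ℂ) + t) hcp hb)
  have hinv := mellinInv_mellin_eq α.re f hx hconv hvert hct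
  rw [mellinInv] at hinv
  set G : ℝ → ℂ := fun t =>
    Complex.Gamma (α + Complex.I * t) * Complex.Gamma (α - Complex.I * t) *
      (u : ℂ) ^ (2 * (Complex.I * t)) with hG
  -- powers of x in terms of u
  have hxu : ((x : ℝ) : ℂ) = (u : ℂ) ^ (-2 : ℂ) := by
    rw [hxdef]
    push_cast
    rw [Complex.cpow_neg, show (2:ℂ) = ((2:ℕ):ℂ) from by norm_num, Complex.cpow_natCast]
  have hlog : (Complex.log (u : ℂ) * (-2 : ℂ)).im = 0 := by
    rw [← Complex.ofReal_log hu.le]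
    simp
  have hcpow : ∀ w : ℂ, ((x : ℝ) : ℂ) ^ w = (u : ℂ) ^ (-2 * w) := fun w => by
    rw [hxu, Complex.cpow_mul w (by rw [hlog]; simpa using Real.pi_pos)
      (by rw [hlog]; exact Real.pi_nonneg)]
  -- the pointwise identity
  have hpt : ∀ y : ℝ, ((x : ℝ) : ℂ) ^ (-((α.re : ℂ) + y * Complex.I)) •
      mellin f ((α.re : ℂ) + y * Complex.I)
      = (u : ℂ) ^ (2 * α) * G (y - α.im) := by
    intro y
    have hkey : (α.re : ℂ) + y * Complex.I = α + Complex.I * ((y - α.im : ℝ) : ℂ) := by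
      apply Complex.ext <;> simp
    rw [hkey]
    have hmel : mellin f (α + Complex.I * ((y - α.im : ℝ) : ℂ))
        = Complex.Gamma (α + Complex.I * ((y - α.im : ℝ) : ℂ)) *
          Complex.Gamma (α - Complex.I * ((y - α.im : ℝ) : ℂ)) := by
      rw [mellin_f α (by simp [hα]) (by simp [hα2])]
      congr 2
      ring
    have hpow : ((x : ℝ) : ℂ) ^ (-(α + Complex.I * ((y - α.im : ℝ) : ℂ)))
        = (u : ℂ) ^ (2 * α) * (u : ℂ) ^ (2 * (Complex.I * ((y - α.im : ℝ) : ℂ))) := by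
      rw [hcpow, show -2 * -(α + Complex.I * ((y - α.im : ℝ) : ℂ))
          = 2 * α + 2 * (Complex.I * ((y - α.im : ℝ) : ℂ)) from by ring,
        Complex.cpow_add _ _ hu0]
    rw [hmel, hpow, smul_eq_mul, hG]
    ring
  -- rewrite the integral
  have hint : (∫ y : ℝ, ((x : ℝ) : ℂ) ^ (-((α.re : ℂ) + y * Complex.I)) •
      mellin f ((α.re : ℂ) + y * Complex.I))
      = (u : ℂ) ^ (2 * α) * ∫ t : ℝ, G t := by
    simp only [hpt]
    rw [MeasureTheory.integral_const_mul, integral_sub_right_eq_self (μ := volume) G α.im]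
  rw [hint] at hinv
  -- solve for the integral
  have hne : ((u : ℂ)) ^ (2 * α) ≠ 0 := by
    rw [Complex.cpow_def_of_ne_zero hu0]
    exact Complex.exp_ne_zero _
  have hπ : (Real.pi : ℂ) ≠ 0 := Complex.ofReal_ne_zero.mpr Real.pi_ne_zero
  rw [Complex.real_smul] at hinv
  push_cast at hinv
  have hJ : (∫ t : ℝ, G t)
      = 2 * (Real.pi : ℂ) * ((u : ℂ) ^ (2 * α))⁻¹ *
        (Complex.Gamma (2 * α) * ((1 : ℂ) + (x : ℝ)) ^ (-(2 * α))) := by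
    simp only [hf] at hinv
    rw [← hinv]
    field_simp
  have hbase : ((u : ℂ) ^ (2 * α))⁻¹ * ((1 : ℂ) + (x : ℝ)) ^ (-(2 * α))
      = ((u : ℂ) + (u : ℂ)⁻¹) ^ (-(2 * α)) := by
    rw [← Complex.cpow_neg, show ((1 : ℂ) + (x : ℝ)) = (((1 + x : ℝ)) : ℂ) from by push_cast; ring,
      ← Complex.mul_cpow_ofReal_nonneg hu.le (by positivity),
      show ((u : ℝ) : ℂ) * ((1 + x : ℝ) : ℂ) = (u : ℂ) + (u : ℂ)⁻¹ from ?_]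
    push_cast [hxdef]
    field_simp
  rw [hJ, show (-2 * α : ℂ) = -(2 * α) from by ring, ← hbase]
  ring
end
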